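/- arXiv:math/0606122 — 2 statements merged into one kernel-verified Lean document; each statement's English description precedes it below -/
import Mathlib

section
/- In 4-move peg solitaire on ℤ², the six parities n_0+n_1, n_1+n_2, n_0+n_2 (for the labeling (x+y) mod 3) together with the three analogous sums for the labeling (x−y) mod 3 are all invariant under legal jumps; hence board positions reachable from one another must lie in the same one of at most 16 position classes determined by these parities. -/
open Finset

abbrev Cell := ℤ × ℤ
abbrev Pos := Finset Cell

/-- The four orthogonal jump directions (4-move solitaire). -/
def dirs4 : Finset Cell := {(1,0),(-1,0),(0,1),(0,-1)}

/-- The eight jump directions (8-move solitaire). -/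
def dirs8 : Finset Cell :=
  {(1,0),(-1,0),(0,1),(0,-1),(1,1),(1,-1),(-1,1),(-1,-1)}

/-- A legal jump on `board` with allowed directions `dirs`, taking position `B` to `B'`:
the peg at `p` jumps over the peg at `p + d` into the empty hole `p + d + d`,
removing the jumped peg. -/
def IsJump (board dirs : Finset Cell) (B B' : Pos) (p d : Cell) : Prop :=
  d ∈ dirs ∧ p ∈ B ∧ p + d ∈ B ∧ p + d + d ∈ board ∧ p + d + d ∉ B ∧
    B' = insert (p + d + d) ((B.erase p).erase (p + d))

/-- A move: one or more consecutive jumps by the same peg, starting at `p` and ending at `q`. -/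
inductive Move (board dirs : Finset Cell) : Pos → Pos → Cell → Cell → Prop
  | single {B B' : Pos} {p d : Cell} (h : IsJump board dirs B B' p d) :
      Move board dirs B B' p (p + d + d)
  | cons {B B' B'' : Pos} {p d q : Cell} (h : IsJump board dirs B B' p d)
      (hm : Move board dirs B' B'' (p + d + d) q) : Move board dirs B B'' p q

/-- A sequence of moves, recorded as a list of (start hole, end hole) pairs. -/
inductive MoveSeq (board dirs : Finset Cell) : Pos → Pos → List (Cell × Cell) → Prop
  | nil (B : Pos) : MoveSeq board dirs B B []
  | cons {B B' B'' : Pos} {p q : Cell} {l : List (Cell × Cell)}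
      (h : Move board dirs B B' p q) (hs : MoveSeq board dirs B' B'' l) :
      MoveSeq board dirs B B'' ((p, q) :: l)

/-- The diamond board of "radius" r : all integer points with |x|+|y| ≤ r. -/
noncomputable def diamondB (r : ℤ) : Finset Cell :=
  ((Finset.Icc (-r) r) ×ˢ (Finset.Icc (-r) r)).filter (fun p => |p.1| + |p.2| ≤ r)

/-- The standard 33-hole cross-shaped board. -/
noncomputable def board33 : Finset Cell :=
  ((Finset.Icc (-3 : ℤ) 3) ×ˢ (Finset.Icc (-3 : ℤ) 3)).filter
    (fun p => |p.1| ≤ 1 ∨ |p.2| ≤ 1)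

/-- The 37-hole board (7×7 square minus three holes at each corner). -/
noncomputable def board37 : Finset Cell :=
  ((Finset.Icc (-3 : ℤ) 3) ×ˢ (Finset.Icc (-3 : ℤ) 3)).filter
    (fun p => |p.1| ≤ 1 ∨ |p.2| ≤ 1 ∨ (|p.1| ≤ 2 ∧ |p.2| ≤ 2))

/-- The central 3×3 block of nine holes. -/
noncomputable def C9 : Finset Cell := (Finset.Icc (-1 : ℤ) 1) ×ˢ (Finset.Icc (-1 : ℤ) 1)

/-- Number of pegs of `B` labeled `i` under the labeling `(x+y) mod 3`. -/
def cnt₁ (B : Pos) (i : ZMod 3) : ℕ :=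
  (B.filter (fun p => ((p.1 + p.2 : ℤ) : ZMod 3) = i)).card

/-- Number of pegs of `B` labeled `i` under the labeling `(x−y) mod 3`. -/
def cnt₂ (B : Pos) (i : ZMod 3) : ℕ :=
  (B.filter (fun p => ((p.1 - p.2 : ℤ) : ZMod 3) = i)).card

/-- The six invariant parities `n₀+n₁, n₁+n₂, n₀+n₂` for the two diagonal labelings. -/
def classOf (B : Pos) :
    (ZMod 2 × ZMod 2 × ZMod 2) × (ZMod 2 × ZMod 2 × ZMod 2) :=
  ((((cnt₁ B 0 + cnt₁ B 1 : ℕ) : ZMod 2), ((cnt₁ B 1 + cnt₁ B 2 : ℕ) : ZMod 2),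
      ((cnt₁ B 0 + cnt₁ B 2 : ℕ) : ZMod 2)),
    (((cnt₂ B 0 + cnt₂ B 1 : ℕ) : ZMod 2), ((cnt₂ B 1 + cnt₂ B 2 : ℕ) : ZMod 2),
      ((cnt₂ B 0 + cnt₂ B 2 : ℕ) : ZMod 2)))

/-- Reachability by a (possibly empty) sequence of legal 4-move jumps. -/
def Reach4 (board : Finset Cell) : Pos → Pos → Prop :=
  Relation.ReflTransGen (fun B B' => ∃ p d, IsJump board dirs4 B B' p d)

/-!
Along a unit direction `d`, each of the labelings `(x + y) mod 3` and `(x - y) mod 3` changes by a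
nonzero constant, so the cells `p, p + d, p + 2d` of a jump carry the three distinct labels. A jump
removes the pegs at `p` and `p + d` and adds one at `p + 2d`, so it changes every count `n_i` by an
odd number and every sum `n_i + n_j` keeps its parity. The third parity of each labeling is the sum
of the other two, which leaves at most `2⁴ = 16` classes.
-/

lemma ne_zero_of_isJump {board dirs : Finset Cell} {B B' : Pos} {p d : Cell}
    (h : IsJump board dirs B B' p d) : d ≠ 0 := by
  rintro rfl
  exact h.2.2.2.2.1 (by simpa using h.2.1)

lemma sum_of_isJump {M : Type*} [AddCommGroup M] (f : Cell → M) {board dirs : Finset Cell}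
    {B B' : Pos} {p d : Cell} (h : IsJump board dirs B B' p d) :
    ∑ x ∈ B', f x = ∑ x ∈ B, f x - f p - f (p + d) + f (p + d + d) := by
  have hpd_ne : p + d ≠ p := by simpa using ne_zero_of_isJump h
  obtain ⟨-, hp, hpd, -, hq, rfl⟩ := h
  rw [sum_insert fun h => hq (mem_of_mem_erase (mem_of_mem_erase h)),
    ← add_sum_erase _ _ hp, ← add_sum_erase _ _ (mem_erase.2 ⟨hpd_ne, hpd⟩)]
  abel

lemma card_filter_label_eq_of_isJump {board dirs : Finset Cell} {B B' : Pos} {p d : Cell}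
    (h : IsJump board dirs B B' p d) (L : Cell → ZMod 3) (hL : ∀ x, L (x + d) = L x + L d)
    (hLd : L d ≠ 0) (i : ZMod 3) :
    (#(B'.filter (L · = i)) : ZMod 2) = #(B.filter (L · = i)) + 1 := by
  have three_labels : ∀ a e : ZMod 3, e ≠ 0 →
      ((if a = i then 1 else 0) + (if a + e = i then 1 else 0) +
        (if a + e + e = i then 1 else 0) : ZMod 2) = 1 := by
    revert i; decide
  rw [← three_labels (L p) (L d) hLd]
  simp only [card_filter, Nat.cast_sum, Nat.cast_ite, Nat.cast_one, Nat.cast_zero,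
    sum_of_isJump _ h, hL, sub_eq_add_neg, ZModModule.neg_eq_self]
  abel

lemma classOf_eq_of_card_parity_flip {B B' : Pos}
    (h₁ : ∀ i, (cnt₁ B' i : ZMod 2) = cnt₁ B i + 1)
    (h₂ : ∀ i, (cnt₂ B' i : ZMod 2) = cnt₂ B i + 1) : classOf B' = classOf B := by
  have flip_flip : ∀ a b : ZMod 2, a + 1 + (b + 1) = a + b := by decide
  simp only [classOf, Nat.cast_add, h₁, h₂, flip_flip]

lemma classOf_eq_of_isJump {board : Finset Cell} {B B' : Pos} {p d : Cell}
    (h : IsJump board dirs4 B B' p d) : classOf B' = classOf B := by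
  have hd : d = (1, 0) ∨ d = (-1, 0) ∨ d = (0, 1) ∨ d = (0, -1) := by
    simpa [dirs4] using h.1
  apply classOf_eq_of_card_parity_flip
  · refine card_filter_label_eq_of_isJump h (fun x => ((x.1 + x.2 : ℤ) : ZMod 3)) ?_ ?_
    · intro x; push_cast [Prod.fst_add, Prod.snd_add]; ring
    · rcases hd with rfl | rfl | rfl | rfl <;> decide
  · refine card_filter_label_eq_of_isJump h (fun x => ((x.1 - x.2 : ℤ) : ZMod 3)) ?_ ?_
    · intro x; push_cast [Prod.fst_add, Prod.snd_add]; ring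
    · rcases hd with rfl | rfl | rfl | rfl <;> decide

lemma classOf_eq_of_reach4 {board : Finset Cell} {B B' : Pos} (h : Reach4 board B B') :
    classOf B = classOf B' := by
  induction h with
  | refl => rfl
  | tail _ hjump ih =>
    obtain ⟨p, d, hjump⟩ := hjump
    exact ih.trans (classOf_eq_of_isJump hjump).symm

def extendParities (z : (ZMod 2 × ZMod 2) × (ZMod 2 × ZMod 2)) :
    (ZMod 2 × ZMod 2 × ZMod 2) × (ZMod 2 × ZMod 2 × ZMod 2) :=
  ((z.1.1, z.1.2, z.1.1 + z.1.2), (z.2.1, z.2.2, z.2.1 + z.2.2))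

lemma range_classOf_subset : Set.range classOf ⊆ Set.range extendParities := by
  rintro _ ⟨B, rfl⟩
  refine ⟨(((cnt₁ B 0 + cnt₁ B 1 : ℕ), (cnt₁ B 1 + cnt₁ B 2 : ℕ)),
    ((cnt₂ B 0 + cnt₂ B 1 : ℕ), (cnt₂ B 1 + cnt₂ B 2 : ℕ))), ?_⟩
  have sum_pairs : ∀ a b c : ZMod 2, a + b + (b + c) = a + c := by decide
  simp only [extendParities, classOf, Nat.cast_add, sum_pairs]

/-- the six parities are invariant under legal 4-move jumps, hence positions
reachable from one another lie in the same of at most 16 position classes. -/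
theorem stmt_1 (board : Finset Cell) :
    (∀ B B' : Pos, Reach4 board B B' → classOf B = classOf B') ∧
      Set.ncard (Set.range classOf) ≤ 16 := by
  refine ⟨fun B B' => classOf_eq_of_reach4, ?_⟩
  calc Set.ncard (Set.range classOf)
      ≤ Set.ncard (Set.range extendParities) :=
        Set.ncard_le_ncard range_classOf_subset (Set.finite_range _)
    _ ≤ Nat.card ((ZMod 2 × ZMod 2) × (ZMod 2 × ZMod 2)) := Finite.card_range_le _
    _ = 16 := by simp
end

section
/- On the 37-hole board under 8-move solitaire, the C9 complement problem (start with only the central 3×3 block of 9 holes empty and all other 28 holes full; finish with pegs exactly on the central 9 holes) cannot be solved in fewer than 13 moves, and in any 13-move solution every move must start outside the central 9 holes and end inside them. -/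
/-!
The eight corner holes `(±3, ±1)`, `(±1, ±3)` of the 37-hole board are never the midpoint of a
jump, so a corner peg can only disappear by moving itself: each corner needs a move starting
there. The five holes of `centralPlus` (the centre and its four orthogonal neighbours) start empty
and end full, so each needs a move ending there. A move preserves the parity of both coordinates;
corners have both coordinates odd while every hole of `centralPlus` has an even one, so these are
13 distinct moves. In a 13-move solution there is no other move, no move lands on a corner and no
move leaves `centralPlus`. A move from a corner then ends on an odd-odd hole that is not a corner,
i.e. in `C9`, and a move into `centralPlus` cannot start on an odd-odd hole of `C9`.
-/

open Finset

def Unjumpable (board dirs : Finset Cell) (c : Cell) : Prop :=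
  ∀ d ∈ dirs, c - d ∈ board → c + d ∉ board

def parityClass (c : Cell) : ℤ × ℤ := (c.1 % 2, c.2 % 2)

theorem List.countP_or_of_disjoint {α : Type*} {P Q : α → Prop} [DecidablePred P]
    [DecidablePred Q] {l : List α} (h : ∀ a ∈ l, P a → ¬Q a) :
    l.countP (fun a => P a ∨ Q a) = l.countP (fun a => P a) + l.countP (fun a => Q a) := by
  induction l with
  | nil => rfl
  | cons a l ih =>
    rw [List.countP_cons, List.countP_cons, List.countP_cons,
      ih fun b hb => h b (List.mem_cons_of_mem a hb)]
    have := h a List.mem_cons_self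
    by_cases hP : P a <;> by_cases hQ : Q a <;> simp_all <;> omega

theorem List.countP_mem_eq_sum {α β : Type*} [DecidableEq β] (l : List α) (f : α → β)
    (s : Finset β) : l.countP (fun a => f a ∈ s) = ∑ b ∈ s, l.countP (fun a => f a = b) := by
  induction l with
  | nil => simp
  | cons a l ih => simp [List.countP_cons, ih, sum_add_distrib]

section

variable {board dirs : Finset Cell} {B B' : Pos} {p q c d : Cell}

namespace IsJump

theorem subset_board (h : IsJump board dirs B B' p d) (hB : B ⊆ board) : B' ⊆ board := by
  obtain ⟨-, -, -, hboard, -, rfl⟩ := h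
  exact insert_subset hboard ((erase_subset _ _).trans ((erase_subset _ _).trans hB))

theorem subset_insert_erase (h : IsJump board dirs B B' p d) :
    B' ⊆ insert (p + d + d) (B.erase p) := by
  obtain ⟨-, -, -, -, -, rfl⟩ := h
  exact insert_subset_insert _ (erase_subset _ _)

theorem mem_of_unjumpable (h : IsJump board dirs B B' p d) (hB : B ⊆ board)
    (hc : Unjumpable board dirs c) (hcB : c ∈ B) (hcp : c ≠ p) : c ∈ B' := by
  obtain ⟨hd, hp, -, hboard, -, rfl⟩ := h
  have hcd : c ≠ p + d := by
    rintro rfl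
    exact hc d hd (by simpa using hB hp) hboard
  exact mem_insert_of_mem (mem_erase.2 ⟨hcd, mem_erase.2 ⟨hcp, hcB⟩⟩)

end IsJump

namespace Move

theorem start_mem (h : Move board dirs B B' p q) : p ∈ B := by
  cases h with
  | single h => exact h.2.1
  | cons h _ => exact h.2.1

theorem end_mem (h : Move board dirs B B' p q) : q ∈ B' := by
  induction h with
  | single h => exact h.2.2.2.2.2 ▸ mem_insert_self _ _
  | cons _ _ ih => exact ih

theorem end_mem_board (h : Move board dirs B B' p q) : q ∈ board := by
  induction h with
  | single h => exact h.2.2.2.1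
  | cons _ _ ih => exact ih

theorem subset_board (h : Move board dirs B B' p q) (hB : B ⊆ board) : B' ⊆ board := by
  induction h with
  | single h => exact h.subset_board hB
  | cons h _ ih => exact ih (h.subset_board hB)

theorem parityClass_eq (h : Move board dirs B B' p q) : parityClass q = parityClass p := by
  induction h with
  | @single _ _ p d _ => simp only [parityClass, Prod.fst_add, Prod.snd_add, Prod.mk.injEq]; omega
  | @cons _ _ _ p d _ _ _ ih =>
    simp only [parityClass, Prod.fst_add, Prod.snd_add, Prod.mk.injEq] at ih ⊢; omega

theorem subset_insert_erase (h : Move board dirs B B' p q) : B' ⊆ insert q (B.erase p) := by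
  induction h with
  | single h => exact h.subset_insert_erase
  | cons h _ ih =>
    intro c hc
    rcases mem_insert.1 (ih hc) with rfl | hc
    · exact mem_insert_self _ _
    · obtain ⟨hne, hc⟩ := mem_erase.1 hc
      rcases mem_insert.1 (h.subset_insert_erase hc) with rfl | hc
      · exact absurd rfl hne
      · exact mem_insert_of_mem hc

theorem mem_of_unjumpable (h : Move board dirs B B' p q) (hB : B ⊆ board)
    (hc : Unjumpable board dirs c) (hcB : c ∈ B) (hcp : c ≠ p) : c ∈ B' ∧ c ≠ q := by
  induction h with
  | single h => exact ⟨h.mem_of_unjumpable hB hc hcB hcp, fun e => h.2.2.2.2.1 (e ▸ hcB)⟩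
  | cons h _ ih =>
    exact ih (h.subset_board hB) (h.mem_of_unjumpable hB hc hcB hcp)
      fun e => h.2.2.2.2.1 (e ▸ hcB)

theorem occupancy_le (h : Move board dirs B B' p q) (c : Cell) :
    (if c ∈ B' then 1 else 0) + (if p = c then 1 else 0) ≤
      (if c ∈ B then 1 else 0) + (if q = c then 1 else 0) := by
  have hp := h.start_mem
  have hsub : c ∈ B' → c = q ∨ c ≠ p ∧ c ∈ B := fun hc => by
    simpa only [mem_insert, mem_erase] using h.subset_insert_erase hc
  split_ifs <;> grind

theorem le_occupancy (h : Move board dirs B B' p q) (hB : B ⊆ board)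
    (hc : Unjumpable board dirs c) :
    (if c ∈ B then 1 else 0) + (if q = c then 1 else 0) ≤
      (if c ∈ B' then 1 else 0) + (if p = c then 1 else 0) := by
  have hq := h.end_mem
  have hstay := h.mem_of_unjumpable hB hc
  split_ifs <;> grind

end Move

namespace MoveSeq

variable {l : List (Cell × Cell)} {K P : Finset Cell}

theorem exists_move (hs : MoveSeq board dirs B B' l) :
    ∀ pq ∈ l, ∃ C C', Move board dirs C C' pq.1 pq.2 := by
  induction hs with
  | nil => simp
  | cons h _ ih =>
    intro pq hpq
    rcases List.mem_cons.1 hpq with rfl | hpq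
    · exact ⟨_, _, h⟩
    · exact ih pq hpq

theorem occupancy_le (hs : MoveSeq board dirs B B' l) (c : Cell) :
    (if c ∈ B' then 1 else 0) + l.countP (fun pq => pq.1 = c) ≤
      (if c ∈ B then 1 else 0) + l.countP (fun pq => pq.2 = c) := by
  induction hs with
  | nil => simp
  | cons h _ ih =>
    have := h.occupancy_le c
    simp only [List.countP_cons, decide_eq_true_eq] at ih ⊢
    omega

theorem le_occupancy (hs : MoveSeq board dirs B B' l) (hB : B ⊆ board)
    (hc : Unjumpable board dirs c) :
    (if c ∈ B then 1 else 0) + l.countP (fun pq => pq.2 = c) ≤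
      (if c ∈ B' then 1 else 0) + l.countP (fun pq => pq.1 = c) := by
  induction hs with
  | nil => simp
  | cons h _ ih =>
    have := h.le_occupancy hB hc
    have := ih (h.subset_board hB)
    simp only [List.countP_cons, decide_eq_true_eq] at this ⊢
    omega

theorem card_add_countP_snd_mem_le (hs : MoveSeq board dirs B B' l) (hB : B ⊆ board)
    (hK : ∀ c ∈ K, Unjumpable board dirs c ∧ c ∈ B ∧ c ∉ B') :
    #K + l.countP (fun pq => pq.2 ∈ K) ≤ l.countP (fun pq => pq.1 ∈ K) := by
  rw [List.countP_mem_eq_sum, List.countP_mem_eq_sum, card_eq_sum_ones, ← sum_add_distrib]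
  refine sum_le_sum fun c hc => ?_
  obtain ⟨hcu, hcB, hcB'⟩ := hK c hc
  simpa [hcB, hcB', add_comm] using hs.le_occupancy hB hcu

theorem card_add_countP_fst_mem_le (hs : MoveSeq board dirs B B' l)
    (hP : ∀ c ∈ P, c ∉ B ∧ c ∈ B') :
    #P + l.countP (fun pq => pq.1 ∈ P) ≤ l.countP (fun pq => pq.2 ∈ P) := by
  rw [List.countP_mem_eq_sum, List.countP_mem_eq_sum, card_eq_sum_ones, ← sum_add_distrib]
  refine sum_le_sum fun c hc => ?_
  obtain ⟨hcB, hcB'⟩ := hP c hc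
  simpa [hcB, hcB', add_comm] using hs.occupancy_le c

theorem card_add_card_add_countP_add_countP_le (hs : MoveSeq board dirs B B' l)
    (hB : B ⊆ board) (hK : ∀ c ∈ K, Unjumpable board dirs c ∧ c ∈ B ∧ c ∉ B')
    (hP : ∀ c ∈ P, c ∉ B ∧ c ∈ B') (hKP : ∀ pq ∈ l, pq.1 ∈ K → pq.2 ∉ P) :
    #K + #P + l.countP (fun pq => pq.2 ∈ K) + l.countP (fun pq => pq.1 ∈ P) ≤
      l.countP (fun pq => pq.1 ∈ K ∨ pq.2 ∈ P) := by
  rw [List.countP_or_of_disjoint hKP]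
  have := hs.card_add_countP_snd_mem_le hB hK
  have := hs.card_add_countP_fst_mem_le hP
  omega

end MoveSeq

end

def corners37 : Finset Cell := {(3,1),(3,-1),(-3,1),(-3,-1),(1,3),(1,-3),(-1,3),(-1,-3)}

def centralPlus : Finset Cell := {(0,0),(1,0),(-1,0),(0,1),(0,-1)}

theorem corners37_spec :
    ∀ c ∈ corners37, Unjumpable board37 dirs8 c ∧ c ∈ board37 \ C9 ∧ c ∉ C9 := by
  unfold Unjumpable; decide

theorem centralPlus_spec : ∀ c ∈ centralPlus, c ∉ board37 \ C9 ∧ c ∈ C9 := by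
  decide

theorem parityClass_ne_of_mem_corners37_of_mem_centralPlus {p q : Cell} (hp : p ∈ corners37)
    (hq : q ∈ centralPlus) : parityClass q ≠ parityClass p := by
  have : ∀ p ∈ corners37, ∀ q ∈ centralPlus, parityClass q ≠ parityClass p := by decide
  exact this p hp q hq

theorem notMem_C9_and_mem_C9 {p q : Cell} (hq : q ∈ board37)
    (hpq : parityClass q = parityClass p) (hqK : q ∉ corners37) (hpP : p ∉ centralPlus) (h : p ∈ corners37 ∨ q ∈ centralPlus) :
    p ∉ C9 ∧ q ∈ C9 := by
  rcases h with hpK | hqP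
  · have : ∀ p ∈ corners37, ∀ q ∈ board37,
        parityClass q = parityClass p → q ∉ corners37 → q ∈ C9 := by
      decide
    exact ⟨(corners37_spec p hpK).2.2, this p hpK q hq hpq hqK⟩
  · have : ∀ q ∈ centralPlus, ∀ p ∈ C9,
        parityClass q = parityClass p → p ∈ centralPlus := by
      decide
    exact ⟨fun hp => hpP (this q hqP p hp hpq), (centralPlus_spec q hqP).2⟩

theorem thirteen_add_countP_add_countP_le {l : List (Cell × Cell)}
    (hs : MoveSeq board37 dirs8 (board37 \ C9) C9 l) :
    13 + l.countP (fun pq => pq.2 ∈ corners37) + l.countP (fun pq => pq.1 ∈ centralPlus) ≤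
      l.countP (fun pq => pq.1 ∈ corners37 ∨ pq.2 ∈ centralPlus) := by
  have hKP : ∀ pq ∈ l, pq.1 ∈ corners37 → pq.2 ∉ centralPlus := fun pq hpq hp hq =>
    have ⟨_, _, hm⟩ := hs.exists_move pq hpq
    parityClass_ne_of_mem_corners37_of_mem_centralPlus hp hq hm.parityClass_eq
  have := hs.card_add_card_add_countP_add_countP_le sdiff_subset corners37_spec
    centralPlus_spec hKP
  rwa [show #corners37 + #centralPlus = 13 by decide] at this

/-- on the 37-hole board under 8-move solitaire, the C9 complement problem
(start with only the central 3×3 block empty, finish with pegs exactly there) cannot be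
solved in fewer than 13 moves, and in any 13-move solution every move starts outside the
central nine holes and ends inside them. -/
theorem stmt_10 :
    (∀ l : List (Cell × Cell), MoveSeq board37 dirs8 (board37 \ C9) C9 l → 13 ≤ l.length) ∧
      (∀ l : List (Cell × Cell), MoveSeq board37 dirs8 (board37 \ C9) C9 l →
        l.length = 13 → ∀ pq ∈ l, pq.1 ∉ C9 ∧ pq.2 ∈ C9) := by
  refine ⟨fun l hs => ?_, fun l hs hlen pq hpq => ?_⟩
  · have := thirteen_add_countP_add_countP_le hs
    have := l.countP_le_length (p := fun pq => pq.1 ∈ corners37 ∨ pq.2 ∈ centralPlus)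
    omega
  · have hbound := thirteen_add_countP_add_countP_le hs
    have hle := l.countP_le_length (p := fun pq => pq.1 ∈ corners37 ∨ pq.2 ∈ centralPlus)
    have hK : l.countP (fun pq => pq.2 ∈ corners37) = 0 := by omega
    have hP : l.countP (fun pq => pq.1 ∈ centralPlus) = 0 := by omega
    have hall : l.countP (fun pq => pq.1 ∈ corners37 ∨ pq.2 ∈ centralPlus) = l.length := by
      omega
    obtain ⟨_, _, hm⟩ := hs.exists_move pq hpq
    exact notMem_C9_and_mem_C9 hm.end_mem_board hm.parityClass_eq
      (by simpa using List.countP_eq_zero.1 hK pq hpq)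
      (by simpa using List.countP_eq_zero.1 hP pq hpq)
      (by simpa using List.countP_eq_length.1 hall pq hpq)
end
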